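/- arXiv:1406.2009 — 5 statements merged into one kernel-verified Lean document; each statement's English description precedes it below -/
import Mathlib

section
/- Let α > 0 with α ≠ 1. Then there exists a constant C (depending only on α) such that for all real b and all R ≥ 0, |∫₀^R exp(i(b·e^x + e^{αx})) dx| ≤ C, and likewise |∫₀^R exp(i(b·e^x − e^{αx})) dx| ≤ C. -/
/-!
Write the phase as `φ x = b eˣ + ε e^{αx}` with `|ε| = 1`, so that `φ' = e^{αx} P` with
`P x = b e^{(1-α)x} + εα` monotone. On any interval of `[0, ∞)` where `|P| ≥ α/2`, integrating
by parts against `1 / (i φ')` gives a bound `10/α`: the boundary terms are at most `2/α`, and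
`|φ''| / φ'² ≤ 2 e^{-αx} + |P'| / P²`, whose integral is controlled by `1/α` plus the total
variation of the monotone function `1/P`. Where `|P| < α/2`, the quantity `|b| e^{(1-α)x}` lies
within a factor `2` of `α`, which confines `x` to an interval of length `2 log 2 / |1 - α|`;
there the integrand is simply bounded by `1`.
-/

open MeasureTheory Complex Set intervalIntegral

theorem norm_integral_cexp_I_mul_le {φ φ' φ'' : ℝ → ℝ} {a c : ℝ} (hac : a ≤ c)
    (hφ : ∀ x ∈ Icc a c, HasDerivAt φ (φ' x) x)
    (hφ' : ∀ x ∈ Icc a c, HasDerivAt φ' (φ'' x) x)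
    (hφ'' : ContinuousOn φ'' (Icc a c)) (hne : ∀ x ∈ Icc a c, φ' x ≠ 0) :
    ‖∫ x in a..c, cexp (I * φ x)‖ ≤ |φ' a|⁻¹ + |φ' c|⁻¹ + ∫ x in a..c, |φ'' x| / φ' x ^ 2 := by
  set e : ℝ → ℂ := fun x => cexp (I * φ x)
  set g : ℝ → ℂ := fun x => e x / (I * φ' x)
  set h : ℝ → ℂ := fun x => I * e x * (φ'' x / φ' x ^ 2 : ℝ)
  have norm_e (x : ℝ) : ‖e x‖ = 1 := by simp [e, mul_comm I, norm_exp_ofReal_mul_I]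
  have hg : ∀ x ∈ uIcc a c, HasDerivAt g (e x + h x) x := by
    intro x hx
    rw [uIcc_of_le hac] at hx
    have hne' : (φ' x : ℂ) ≠ 0 := ofReal_ne_zero.mpr (hne x hx)
    refine (((hφ x hx).ofReal_comp.const_mul I).cexp.div
      ((hφ' x hx).ofReal_comp.const_mul I) (mul_ne_zero I_ne_zero hne')).congr_deriv ?_
    simp only [h, e]
    push_cast
    field_simp
    ring_nf
    rw [I_sq]
    ring
  have he_cont : ContinuousOn e (Icc a c) := fun x hx =>
    ((hφ x hx).ofReal_comp.const_mul I).cexp.continuousAt.continuousWithinAt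
  have hφ'_cont : ContinuousOn φ' (Icc a c) := fun x hx =>
    (hφ' x hx).continuousAt.continuousWithinAt
  have hh_cont : ContinuousOn h (Icc a c) :=
    (continuousOn_const.mul he_cont).mul <| continuous_ofReal.comp_continuousOn <|
      hφ''.div (hφ'_cont.pow 2) fun x hx => pow_ne_zero 2 (hne x hx)
  have he_int : IntervalIntegrable e volume a c := he_cont.intervalIntegrable_of_Icc hac
  have hh_int : IntervalIntegrable h volume a c := hh_cont.intervalIntegrable_of_Icc hac
  have hibp : ∫ x in a..c, e x = g c - g a - ∫ x in a..c, h x := by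
    rw [← integral_eq_sub_of_hasDerivAt hg (he_int.add hh_int), integral_add he_int hh_int]
    ring
  have norm_g (x : ℝ) : ‖g x‖ = |φ' x|⁻¹ := by simp [g, norm_e]
  have norm_h (x : ℝ) : ‖h x‖ = |φ'' x| / φ' x ^ 2 := by simp [h, norm_e]
  calc ‖∫ x in a..c, e x‖ ≤ ‖g c‖ + ‖g a‖ + ‖∫ x in a..c, h x‖ := by
        rw [hibp]
        exact (norm_sub_le _ _).trans (add_le_add_left (norm_sub_le _ _) _)
    _ ≤ |φ' a|⁻¹ + |φ' c|⁻¹ + ∫ x in a..c, |φ'' x| / φ' x ^ 2 := by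
        rw [norm_g, norm_g, add_comm |φ' c|⁻¹]
        gcongr
        simpa only [norm_h] using intervalIntegral.norm_integral_le_integral_norm (f := h) hac

theorem integral_abs_deriv_div_sq_le {P P' : ℝ → ℝ} {a c : ℝ} (hac : a ≤ c)
    (hP : ∀ x ∈ Icc a c, HasDerivAt P (P' x) x) (hP' : ContinuousOn P' (Icc a c))
    (hne : ∀ x ∈ Icc a c, P x ≠ 0)
    (hsign : (∀ x ∈ Icc a c, 0 ≤ P' x) ∨ ∀ x ∈ Icc a c, P' x ≤ 0) :
    ∫ x in a..c, |P' x| / P x ^ 2 ≤ |P a|⁻¹ + |P c|⁻¹ := by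
  rw [← uIcc_of_le hac] at hP hP' hne hsign
  have hP_cont : ContinuousOn P (uIcc a c) := fun x hx =>
    (hP x hx).continuousAt.continuousWithinAt
  have hftc : ∫ x in a..c, P' x / P x ^ 2 = (P a)⁻¹ - (P c)⁻¹ := by
    rw [integral_eq_sub_of_hasDerivAt (f := fun x => -(P x)⁻¹) (f' := fun x => P' x / P x ^ 2)
      (fun x hx => ((hP x hx).inv (hne x hx)).neg.congr_deriv (by ring))
      (hP'.div (hP_cont.pow 2) fun x hx => pow_ne_zero 2 (hne x hx)).intervalIntegrable]
    ring
  have hPa := abs_le.mp (abs_inv (P a)).le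
  have hPc := abs_le.mp (abs_inv (P c)).le
  rcases hsign with hpos | hneg
  · rw [integral_congr fun x hx => by rw [abs_of_nonneg (hpos x hx)], hftc]
    linarith
  · rw [integral_congr fun x hx => by rw [abs_of_nonpos (hneg x hx), neg_div],
      intervalIntegral.integral_neg, hftc]
    linarith

theorem integral_exp_neg_mul_le {α a c : ℝ} (hα : 0 < α) (ha : 0 ≤ a) :
    ∫ x in a..c, Real.exp (-(α * x)) ≤ 1 / α := by
  have hderiv (x : ℝ) :
      HasDerivAt (fun y => -Real.exp (-(α * y)) / α) (Real.exp (-(α * x))) x :=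
    (((hasDerivAt_id x).const_mul α).neg.exp.neg.div_const α).congr_deriv (by field_simp; simp)
  rw [integral_eq_sub_of_hasDerivAt (fun x _ => hderiv x)
    ((by fun_prop : Continuous _).intervalIntegrable _ _), div_sub_div_same,
    div_le_div_iff_of_pos_right hα]
  have : Real.exp (-(α * a)) ≤ 1 := Real.exp_le_one_iff.mpr (by nlinarith)
  linarith [Real.exp_pos (-(α * c))]

theorem abs_mul_add_div_sq_le {α E p q : ℝ} (hα : 0 < α) (hE : 1 ≤ E) (hp : α / 2 ≤ |p|) :
    |E * (α * p + q)| / (E * p) ^ 2 ≤ 2 * E⁻¹ + |q| / p ^ 2 := by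
  have hp0 : p ≠ 0 := abs_pos.mp ((half_pos hα).trans_le hp)
  have hE0 : 0 < E := by linarith
  have hsum : |α * p + q| ≤ 2 * p ^ 2 + |q| := by
    refine (abs_add_le _ _).trans (add_le_add_left ?_ _)
    rw [abs_mul, abs_of_pos hα, ← sq_abs]
    nlinarith [abs_nonneg p]
  rw [abs_mul, abs_of_pos hE0, mul_pow, div_le_iff₀ (by positivity)]
  calc E * |α * p + q| ≤ E * (2 * p ^ 2 + |q|) := by gcongr
    _ ≤ 2 * E * p ^ 2 + E ^ 2 * |q| := by
      nlinarith [mul_le_mul_of_nonneg_right hE (mul_nonneg hE0.le (abs_nonneg q))]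
    _ = (2 * E⁻¹ + |q| / p ^ 2) * (E ^ 2 * p ^ 2) := by
      field_simp

theorem exists_split_around {R x₀ r : ℝ} (hR : 0 ≤ R) (hr : 0 ≤ r) :
    ∃ a c, 0 ≤ a ∧ a ≤ c ∧ c ≤ R ∧ c - a ≤ 2 * r ∧
      (a = 0 ∨ a ≤ x₀ - r) ∧ (c = R ∨ x₀ + r ≤ c) :=
  ⟨min R (max 0 (x₀ - r)), min R (max 0 (x₀ + r)), by grind⟩

theorem norm_integral_le_of_far_from {f : ℝ → ℂ} (hf : Continuous f) (hf1 : ∀ x, ‖f x‖ ≤ 1)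
    {x₀ r M : ℝ} (hr : 0 ≤ r) (hM : 0 ≤ M)
    (hfar : ∀ a c, 0 ≤ a → a ≤ c → (∀ x ∈ Icc a c, r ≤ |x - x₀|) → ‖∫ x in a..c, f x‖ ≤ M)
    {R : ℝ} (hR : 0 ≤ R) : ‖∫ x in 0..R, f x‖ ≤ 2 * M + 2 * r := by
  obtain ⟨a, c, h0a, hac, hcR, hca, ha, hc⟩ := exists_split_around (x₀ := x₀) hR hr
  have hleft : ‖∫ x in 0..a, f x‖ ≤ M := by
    rcases ha with rfl | ha
    · simpa using hM
    · refine hfar 0 a le_rfl h0a fun x hx => ?_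
      rw [abs_sub_comm]
      exact le_abs.mpr (.inl (by linarith [hx.2]))
  have hright : ‖∫ x in c..R, f x‖ ≤ M := by
    rcases hc with rfl | hc
    · simpa using hM
    · exact hfar c R (h0a.trans hac) hcR fun x hx => le_abs.mpr (.inl (by linarith [hx.1]))
  have hmid : ‖∫ x in a..c, f x‖ ≤ 2 * r :=
    calc ‖∫ x in a..c, f x‖ ≤ 1 * |c - a| := norm_integral_le_of_norm_le_const fun x _ => hf1 x
      _ ≤ 2 * r := by rwa [one_mul, abs_of_nonneg (sub_nonneg.mpr hac)]
  rw [← integral_add_adjacent_intervals (hf.intervalIntegrable 0 c) (hf.intervalIntegrable c R),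
    ← integral_add_adjacent_intervals (hf.intervalIntegrable 0 a) (hf.intervalIntegrable a c)]
  calc _ ≤ ‖∫ x in 0..a, f x‖ + ‖∫ x in a..c, f x‖ + ‖∫ x in c..R, f x‖ :=
        (norm_add_le _ _).trans (add_le_add_left (norm_add_le _ _) _)
    _ ≤ 2 * M + 2 * r := by linarith

namespace ExpPhase

noncomputable def phase (α ε b x : ℝ) : ℝ := b * Real.exp x + ε * Real.exp (α * x)

noncomputable def scaledDeriv (α ε b x : ℝ) : ℝ := b * Real.exp ((1 - α) * x) + ε * α

variable {α ε b : ℝ}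

@[fun_prop]
theorem continuous_scaledDeriv : Continuous (scaledDeriv α ε b) := by
  unfold scaledDeriv
  fun_prop

theorem hasDerivAt_scaledDeriv (x : ℝ) :
    HasDerivAt (scaledDeriv α ε b) (b * (1 - α) * Real.exp ((1 - α) * x)) x :=
  ((((hasDerivAt_id x).const_mul (1 - α)).exp.const_mul b).add_const (ε * α)).congr_deriv
    (by simp; ring)

theorem hasDerivAt_phase (x : ℝ) :
    HasDerivAt (phase α ε b) (Real.exp (α * x) * scaledDeriv α ε b x) x := by
  refine (((Real.hasDerivAt_exp x).const_mul b).add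
    (((hasDerivAt_id x).const_mul α).exp.const_mul ε)).congr_deriv ?_
  have hexp : Real.exp (α * x) * Real.exp ((1 - α) * x) = Real.exp x := by
    rw [← Real.exp_add]
    ring_nf
  simp only [scaledDeriv, id, mul_one]
  linear_combination b * hexp.symm

theorem hasDerivAt_exp_mul_scaledDeriv (x : ℝ) :
    HasDerivAt (fun y => Real.exp (α * y) * scaledDeriv α ε b y)
      (Real.exp (α * x) * (α * scaledDeriv α ε b x + b * (1 - α) * Real.exp ((1 - α) * x))) x :=
  (((hasDerivAt_id x).const_mul α).exp.mul (hasDerivAt_scaledDeriv x)).congr_deriv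
    (by simp; ring)

theorem integral_abs_deriv_phase_div_sq_le (hα : 0 < α) {a c : ℝ} (ha : 0 ≤ a) (hac : a ≤ c)
    (hlarge : ∀ x ∈ Icc a c, α / 2 ≤ |scaledDeriv α ε b x|) :
    ∫ x in a..c,
      |Real.exp (α * x) * (α * scaledDeriv α ε b x + b * (1 - α) * Real.exp ((1 - α) * x))| /
        (Real.exp (α * x) * scaledDeriv α ε b x) ^ 2 ≤ 6 / α := by
  set P := scaledDeriv α ε b
  set P' : ℝ → ℝ := fun x => b * (1 - α) * Real.exp ((1 - α) * x)
  have hPne : ∀ x ∈ Icc a c, P x ≠ 0 := fun x hx =>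
    abs_pos.mp ((half_pos hα).trans_le (hlarge x hx))
  have hPinv : ∀ x ∈ Icc a c, |P x|⁻¹ ≤ 2 / α := fun x hx => by
    simpa using inv_anti₀ (half_pos hα) (hlarge x hx)
  have hsign : (∀ x ∈ Icc a c, 0 ≤ P' x) ∨ ∀ x ∈ Icc a c, P' x ≤ 0 :=
    (le_total 0 (b * (1 - α))).imp (fun h x _ => mul_nonneg h (Real.exp_pos _).le)
      fun h x _ => mul_nonpos_of_nonpos_of_nonneg h (Real.exp_pos _).le
  have hP'_cont : Continuous P' := by fun_prop
  have hexp_int : IntervalIntegrable (fun x => 2 * Real.exp (-(α * x))) volume a c :=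
    (by fun_prop : Continuous fun x => 2 * Real.exp (-(α * x))).intervalIntegrable _ _
  have hP'_int : IntervalIntegrable (fun x => |P' x| / P x ^ 2) volume a c :=
    (hP'_cont.abs.continuousOn.div (by fun_prop) fun x hx =>
      pow_ne_zero 2 (hPne x hx)).intervalIntegrable_of_Icc hac
  have hφ''_int : IntervalIntegrable
      (fun x => |Real.exp (α * x) * (α * P x + P' x)| / (Real.exp (α * x) * P x) ^ 2) volume a c :=
    ((by fun_prop : Continuous fun x => |Real.exp (α * x) * (α * P x + P' x)|).continuousOn.div
      (by fun_prop) fun x hx => pow_ne_zero 2 (mul_ne_zero (Real.exp_ne_zero _) (hPne x hx))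
      ).intervalIntegrable_of_Icc hac
  calc _ ≤ ∫ x in a..c, (2 * Real.exp (-(α * x)) + |P' x| / P x ^ 2) := by
        refine integral_mono_on hac hφ''_int (hexp_int.add hP'_int) fun x hx => ?_
        rw [Real.exp_neg]
        exact abs_mul_add_div_sq_le hα (Real.one_le_exp (mul_nonneg hα.le (ha.trans hx.1)))
          (hlarge x hx)
    _ = 2 * (∫ x in a..c, Real.exp (-(α * x))) + ∫ x in a..c, |P' x| / P x ^ 2 := by
        rw [intervalIntegral.integral_add hexp_int hP'_int, intervalIntegral.integral_const_mul]
    _ ≤ 2 * (1 / α) + (2 / α + 2 / α) :=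
        add_le_add (mul_le_mul_of_nonneg_left (integral_exp_neg_mul_le hα ha) zero_le_two) <|
          (integral_abs_deriv_div_sq_le hac (fun x _ => hasDerivAt_scaledDeriv x)
            hP'_cont.continuousOn hPne hsign).trans
            (add_le_add (hPinv a ⟨le_rfl, hac⟩) (hPinv c ⟨hac, le_rfl⟩))
    _ = 6 / α := by ring

theorem norm_integral_cexp_phase_le (hα : 0 < α) {a c : ℝ} (ha : 0 ≤ a) (hac : a ≤ c)
    (hlarge : ∀ x ∈ Icc a c, α / 2 ≤ |scaledDeriv α ε b x|) :
    ‖∫ x in a..c, cexp (I * phase α ε b x)‖ ≤ 10 / α := by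
  have hφ'inv : ∀ x ∈ Icc a c, |Real.exp (α * x) * scaledDeriv α ε b x|⁻¹ ≤ 2 / α := by
    intro x hx
    rw [abs_mul, Real.abs_exp, mul_inv]
    refine (mul_le_of_le_one_left (by positivity) (inv_le_one_of_one_le₀
      (Real.one_le_exp (mul_nonneg hα.le (ha.trans hx.1))))).trans ?_
    simpa using inv_anti₀ (half_pos hα) (hlarge x hx)
  have hibp := norm_integral_cexp_I_mul_le hac (fun x _ => hasDerivAt_phase x)
    (fun x _ => hasDerivAt_exp_mul_scaledDeriv x) (by fun_prop) fun x hx =>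
      mul_ne_zero (Real.exp_ne_zero _) (abs_pos.mp ((half_pos hα).trans_le (hlarge x hx)))
  have htotal : 2 / α + 2 / α + 6 / α = 10 / α := by ring
  linarith [hφ'inv a ⟨le_rfl, hac⟩, hφ'inv c ⟨hac, le_rfl⟩,
    integral_abs_deriv_phase_div_sq_le hα ha hac hlarge]

-- `log (α / |b|) / (1 - α)` solves `|b| e^{(1-α)x} = α`; for `b = 0` the bound holds everywhere.
theorem half_le_abs_scaledDeriv (hα : 0 < α) (hα1 : α ≠ 1) (hε : |ε| = 1) {x : ℝ}
    (hx : Real.log 2 / |1 - α| ≤ |x - Real.log (α / |b|) / (1 - α)|) :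
    α / 2 ≤ |scaledDeriv α ε b x| := by
  by_contra! hsmall
  have hεα : |ε * α| = α := by rw [abs_mul, hε, one_mul, abs_of_pos hα]
  rcases eq_or_ne b 0 with rfl | hb
  · simp only [scaledDeriv, zero_mul, zero_add, hεα] at hsmall
    linarith
  set u := |b| * Real.exp ((1 - α) * x)
  have hu : |u - α| < α / 2 := by
    have := abs_abs_sub_abs_le_abs_sub (b * Real.exp ((1 - α) * x)) (-(ε * α))
    rw [abs_neg, hεα, abs_mul, Real.abs_exp, sub_neg_eq_add] at this
    exact this.trans_lt hsmall
  have hu_pos : 0 < u / α := div_pos (by linarith [(abs_lt.mp hu).1]) hα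
  have hlog_u : Real.log (u / α) = (1 - α) * (x - Real.log (α / |b|) / (1 - α)) := by
    rw [mul_sub, mul_div_cancel₀ _ (sub_ne_zero.mpr hα1.symm), Real.log_div (by positivity) hα.ne',
      Real.log_mul (abs_pos.mpr hb).ne' (Real.exp_ne_zero _), Real.log_exp,
      Real.log_div hα.ne' (abs_pos.mpr hb).ne']
    ring
  have hlog_lt : |Real.log (u / α)| < Real.log 2 := by
    rw [abs_lt, ← Real.log_inv, Real.log_lt_log_iff (by norm_num) hu_pos,
      Real.log_lt_log_iff hu_pos (by norm_num), lt_div_iff₀ hα, div_lt_iff₀ hα]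
    constructor <;> linarith [abs_lt.mp hu]
  rw [hlog_u, abs_mul] at hlog_lt
  rw [div_le_iff₀' (abs_pos.mpr (sub_ne_zero.mpr hα1.symm))] at hx
  linarith

theorem norm_integral_cexp_phase_le_of_abs_eq_one (hα : 0 < α) (hα1 : α ≠ 1) (hε : |ε| = 1)
    (b : ℝ) {R : ℝ} (hR : 0 ≤ R) :
    ‖∫ x in 0..R, cexp (I * phase α ε b x)‖ ≤ 2 * (10 / α) + 2 * (Real.log 2 / |1 - α|) :=
  norm_integral_le_of_far_from (by unfold phase; fun_prop)
    (fun x => by rw [mul_comm, norm_exp_ofReal_mul_I]) (by positivity) (by positivity)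
    (fun _ _ ha hac hfar => norm_integral_cexp_phase_le hα ha hac fun x hx =>
      half_le_abs_scaledDeriv hα hα1 hε (hfar x hx)) hR

end ExpPhase

/-- Uniform boundedness of the oscillatory integrals
`∫₀^R exp(i(b·e^x ± e^{αx})) dx` for `α > 0`, `α ≠ 1`, with a constant
depending only on `α`. -/
theorem stmt_1 (α : ℝ) (hα : 0 < α) (hα1 : α ≠ 1) :
    ∃ C : ℝ, ∀ b R : ℝ, 0 ≤ R →
      ‖∫ x in (0:ℝ)..R,
          Complex.exp (Complex.I * (b * Real.exp x + Real.exp (α * x)))‖ ≤ C ∧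
      ‖∫ x in (0:ℝ)..R,
          Complex.exp (Complex.I * (b * Real.exp x - Real.exp (α * x)))‖ ≤ C := by
  refine ⟨2 * (10 / α) + 2 * (Real.log 2 / |1 - α|), fun b R hR => ⟨?_, ?_⟩⟩
  · simpa [ExpPhase.phase] using
      ExpPhase.norm_integral_cexp_phase_le_of_abs_eq_one hα hα1 (ε := 1) (by norm_num) b hR
  · simpa [ExpPhase.phase, sub_eq_add_neg] using
      ExpPhase.norm_integral_cexp_phase_le_of_abs_eq_one hα hα1 (ε := -1) (by norm_num) b hR
end

section
/- Let α > 0, α ≠ 1, and b ∈ ℝ. Define h_b(x) = b·e^x − e^{αx}, so h_b''(x) = b·e^x − α²·e^{αx}. There is a constant C depending only on α (one may take C = 10 + α^{-1}·log((e+1)/(α²·|e^α − e|))) such that for every z ≥ C: if |h_b''(z)| < 1 then |h_b''(z+1)| > 1. -/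
/-- One-step separation for the second derivative `h_b''(x) = b e^x - α² e^{αx}`:
beyond the explicit threshold `C = 10 + α⁻¹ log((e+1)/(α²|e^α - e|))`,
if `|h_b''(z)| < 1` then `|h_b''(z+1)| > 1`. -/
theorem stmt_3 (α : ℝ) (hα : 0 < α) (hα1 : α ≠ 1) (b : ℝ) :
    ∀ z : ℝ,
      10 + α⁻¹ * Real.log ((Real.exp 1 + 1) / (α ^ 2 * |Real.exp α - Real.exp 1|)) ≤ z →
      |b * Real.exp z - α ^ 2 * Real.exp (α * z)| < 1 →
      1 < |b * Real.exp (z + 1) - α ^ 2 * Real.exp (α * (z + 1))| := by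
  intro z hz h1
  have he : (0:ℝ) < Real.exp 1 := Real.exp_pos 1
  have hne : Real.exp α - Real.exp 1 ≠ 0 := by
    intro h
    exact hα1 (Real.exp_eq_exp.mp (by linarith))
  have habs : 0 < |Real.exp α - Real.exp 1| := abs_pos.mpr hne
  have hα2 : (0:ℝ) < α ^ 2 := by positivity
  have hM : 0 < (Real.exp 1 + 1) / (α ^ 2 * |Real.exp α - Real.exp 1|) := by positivity
  set L := Real.log ((Real.exp 1 + 1) / (α ^ 2 * |Real.exp α - Real.exp 1|)) with hLdef
  set A := b * Real.exp z with hA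
  set B := α ^ 2 * Real.exp (α * z) with hB
  have hBpos : 0 < B := by positivity
  -- L ≤ α * z
  have hzL : L ≤ α * z := by
    have h10 : α⁻¹ * L ≤ z - 10 := by linarith
    have := mul_le_mul_of_nonneg_left h10 hα.le
    rw [mul_inv_cancel_left₀ hα.ne'] at this
    nlinarith
  -- lower bound on B * |e^α - e|
  have hexp : (Real.exp 1 + 1) / (α ^ 2 * |Real.exp α - Real.exp 1|) ≤ Real.exp (α * z) := by
    calc _ = Real.exp L := (Real.exp_log hM).symm
    _ ≤ _ := Real.exp_le_exp.mpr hzL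
  have hBe : Real.exp 1 + 1 ≤ B * |Real.exp α - Real.exp 1| := by
    rw [hB]
    have := mul_le_mul_of_nonneg_left hexp (mul_pos hα2 habs).le
    calc Real.exp 1 + 1
        = α ^ 2 * |Real.exp α - Real.exp 1| *
          ((Real.exp 1 + 1) / (α ^ 2 * |Real.exp α - Real.exp 1|)) := by
          field_simp
      _ ≤ α ^ 2 * |Real.exp α - Real.exp 1| * Real.exp (α * z) := this
      _ = α ^ 2 * Real.exp (α * z) * |Real.exp α - Real.exp 1| := by ring
  -- rewrite the goal
  have hgoal : b * Real.exp (z + 1) - α ^ 2 * Real.exp (α * (z + 1)) =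
      Real.exp 1 * (A - B) + (Real.exp 1 - Real.exp α) * B := by
    rw [Real.exp_add, show α * (z + 1) = α * z + α by ring, Real.exp_add, hA, hB]
    ring
  rw [hgoal]
  have h2 : |(Real.exp 1 - Real.exp α) * B| - |-(Real.exp 1 * (A - B))| ≤
      |Real.exp 1 * (A - B) + (Real.exp 1 - Real.exp α) * B| := by
    have := abs_sub_abs_le_abs_sub ((Real.exp 1 - Real.exp α) * B) (-(Real.exp 1 * (A - B)))
    simpa [sub_neg_eq_add, add_comm] using this
  have h3 : |(Real.exp 1 - Real.exp α) * B| = B * |Real.exp α - Real.exp 1| := by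
    rw [abs_mul, abs_of_pos hBpos, ← abs_neg, show -(Real.exp 1 - Real.exp α) = Real.exp α - Real.exp 1 by ring]
    ring
  have h4 : |-(Real.exp 1 * (A - B))| < Real.exp 1 := by
    rw [abs_neg, abs_mul, abs_of_pos he]
    nlinarith
  linarith [h2, h3.ge, h4]
end

section
/- Let γ ∈ (−1, 0) and define Φ(ζ) = ∫₀^∞ ρ^γ / (ρ − ζ) dρ for ζ ∈ ℂ \ [0, ∞). Then Φ(ζ) = Φ(−1) · Δ(ζ), where Δ is the branch of z ↦ z^γ on ℂ \ [0, ∞) that is positive on the negative real axis; consequently Φ is injective on ℂ \ [0, ∞). -/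
/-!
Write `w = -ζ`, so that `w` ranges over the slit plane. For real `w = a > 0` the substitution
`ρ = a x` gives `Φ(-a) = a^γ Φ(-1)`. Both `w ↦ Φ(-w)` and `w ↦ Φ(-1) w^γ` are holomorphic on the
slit plane (the former by differentiation under the integral sign, dominated by a multiple of
`ρ^γ / (ρ + 1)`), which is connected, so the identity theorem extends the equality from the
positive reals to the whole slit plane. Injectivity follows because `Φ(-1) > 0` and `z ↦ z^γ` is
injective for `0 < |γ| < 1`.
-/

open MeasureTheory Complex

/-- `Φ(ζ) = ∫₀^∞ ρ^γ/(ρ - ζ) dρ` for `ζ ∈ ℂ \ [0,∞)`. -/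
noncomputable def Phi (γ : ℝ) (ζ : ℂ) : ℂ :=
  ∫ ρ in Set.Ioi (0:ℝ), ((ρ ^ γ : ℝ) : ℂ) / ((ρ : ℂ) - ζ)

open Set Filter Topology Metric

lemma neg_mem_slitPlane_iff {ζ : ℂ} : -ζ ∈ slitPlane ↔ ∀ r : ℝ, 0 ≤ r → ζ ≠ r := by
  constructor
  · rintro h r hr rfl
    rw [← ofReal_neg, ofReal_mem_slitPlane] at h
    linarith
  · intro h
    by_contra hζ
    rw [mem_slitPlane_iff, neg_re, neg_im, neg_pos, ne_eq, neg_eq_zero, not_or, not_lt,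
      not_not] at hζ
    exact h ζ.re hζ.1 (ext rfl (by simpa using hζ.2))

lemma exists_mul_add_one_le_norm_ofReal_add {w₀ : ℂ} (hw₀ : w₀ ∈ slitPlane) :
    ∃ c > 0, ∃ r > 0, ∀ w ∈ ball w₀ r, ∀ t : ℝ, 0 ≤ t → c * (t + 1) ≤ ‖(t : ℂ) + w‖ := by
  obtain ⟨ε, hε, hball⟩ := Metric.isOpen_iff.1 isOpen_slitPlane w₀ hw₀
  obtain ⟨r, hr, rfl⟩ : ∃ r > 0, ε = 2 * r := ⟨ε / 2, by positivity, by ring⟩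
  obtain ⟨M, hM, hMdef⟩ : ∃ M ≥ 0, M = ‖w₀‖ + r := ⟨_, by positivity, rfl⟩
  refine ⟨r / (r + M + 1), by positivity, r, hr, fun w hw t ht => ?_⟩
  rw [mem_ball, dist_eq_norm] at hw
  -- `-t` is not in the slit plane, so it lies at distance at least `2 r` from `w₀`
  have h_near : r ≤ ‖(t : ℂ) + w‖ := by
    by_contra! h
    have : ((-t : ℝ) : ℂ) ∈ ball w₀ (2 * r) := by
      rw [mem_ball, dist_eq_norm]
      calc ‖((-t : ℝ) : ℂ) - w₀‖ = ‖-((t : ℂ) + w) - (w₀ - w)‖ := by push_cast; ring_nf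
        _ ≤ ‖(t : ℂ) + w‖ + ‖w₀ - w‖ := (norm_sub_le _ _).trans_eq (by rw [norm_neg])
        _ < 2 * r := by rw [norm_sub_rev]; linarith
    linarith [ofReal_mem_slitPlane.1 (hball this)]
  have h_far : t - M ≤ ‖(t : ℂ) + w‖ := by
    have h1 : t ≤ ‖(t : ℂ) + w‖ + ‖w‖ := by
      simpa [abs_of_nonneg ht] using norm_sub_le ((t : ℂ) + w) w
    linarith [norm_le_norm_add_norm_sub' w w₀]
  rw [div_mul_eq_mul_div, div_le_iff₀ (by positivity)]
  rcases le_total t (r + M) with h | h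
  · nlinarith [mul_le_mul_of_nonneg_right h_near (by positivity : 0 ≤ r + M + 1)]
  · nlinarith [mul_le_mul_of_nonneg_right h_far (by positivity : 0 ≤ r + M + 1)]

lemma norm_rpow_div_pow_le {γ c t : ℝ} {w : ℂ} {n : ℕ} (hn : n ≠ 0) (hc : 0 < c) (ht : 0 < t)
    (h : c * (t + 1) ≤ ‖(t : ℂ) + w‖) :
    ‖((t ^ γ : ℝ) : ℂ) / ((t : ℂ) + w) ^ n‖ ≤ c⁻¹ ^ n * (t ^ γ / (t + 1)) := by
  have htγ : 0 < t ^ γ := Real.rpow_pos_of_pos ht γ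
  rw [norm_div, norm_pow, norm_real, Real.norm_of_nonneg htγ.le]
  calc t ^ γ / ‖(t : ℂ) + w‖ ^ n ≤ t ^ γ / (c * (t + 1)) ^ n := by gcongr
    _ = c⁻¹ ^ n * (t ^ γ / (t + 1) ^ n) := by rw [mul_pow]; ring
    _ ≤ c⁻¹ ^ n * (t ^ γ / (t + 1)) := by
      gcongr
      exact le_self_pow₀ (by linarith) hn

lemma rpowIntegrand₀₁_add_one_eqOn {γ : ℝ} (hγ : γ ∈ Ioo (-1) 0) :
    EqOn (Real.rpowIntegrand₀₁ (γ + 1) · 1) (fun t => t ^ γ / (t + 1)) (Ioi 0) := by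
  intro t ht
  have hp : γ + 1 ∈ Ioo 0 1 := ⟨by linarith [hγ.1], by linarith [hγ.2]⟩
  simp [Real.rpowIntegrand₀₁_eq_pow_div hp (le_of_lt ht) zero_le_one]

lemma integrableOn_rpow_div_add_one {γ : ℝ} (hγ : γ ∈ Ioo (-1) 0) :
    IntegrableOn (fun t : ℝ => t ^ γ / (t + 1)) (Ioi 0) :=
  (integrableOn_congr_fun (rpowIntegrand₀₁_add_one_eqOn hγ) measurableSet_Ioi).1
    (Real.integrableOn_rpowIntegrand₀₁_Ioi ⟨by linarith [hγ.1], by linarith [hγ.2]⟩ zero_le_one)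

lemma integral_rpow_div_add_one_pos {γ : ℝ} (hγ : γ ∈ Ioo (-1) 0) :
    0 < ∫ t in Ioi (0 : ℝ), t ^ γ / (t + 1) := by
  rw [← setIntegral_congr_fun measurableSet_Ioi (rpowIntegrand₀₁_add_one_eqOn hγ)]
  exact Real.integral_rpowIntegrand₀₁_one_pos ⟨by linarith [hγ.1], by linarith [hγ.2]⟩

lemma hasDerivAt_div_const_add (a b w : ℂ) (h : b + w ≠ 0) :
    HasDerivAt (fun w => a / (b + w)) (-(a / (b + w) ^ 2)) w := by
  simpa [div_eq_mul_inv] using (((hasDerivAt_id w).const_add b).inv h).const_mul a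

lemma differentiableAt_Phi_neg {γ : ℝ} (hγ : γ ∈ Ioo (-1) 0) {w₀ : ℂ} (hw₀ : w₀ ∈ slitPlane) :
    DifferentiableAt ℂ (fun w => Phi γ (-w)) w₀ := by
  obtain ⟨c, hc, r, hr, hb⟩ := exists_mul_add_one_le_norm_ofReal_add hw₀
  have hne : ∀ w ∈ ball w₀ r, ∀ t : ℝ, 0 < t → (t : ℂ) + w ≠ 0 := fun w hw t ht h0 => by
    have := hb w hw t ht.le
    rw [h0, norm_zero] at this
    nlinarith
  have hmeas : ∀ w : ℂ, ∀ n : ℕ, AEStronglyMeasurable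
      (fun t : ℝ => ((t ^ γ : ℝ) : ℂ) / ((t : ℂ) + w) ^ n) (volume.restrict (Ioi 0)) :=
    fun w n => (by fun_prop : Measurable _).aestronglyMeasurable
  have hbound : ∀ n ≠ 0, ∀ᵐ t ∂(volume.restrict (Ioi (0 : ℝ))), ∀ w ∈ ball w₀ r,
      ‖((t ^ γ : ℝ) : ℂ) / ((t : ℂ) + w) ^ n‖ ≤ c⁻¹ ^ n * (t ^ γ / (t + 1)) :=
    fun n hn => ae_restrict_of_forall_mem measurableSet_Ioi fun t ht w hw =>
      norm_rpow_div_pow_le hn hc ht (hb w hw t (le_of_lt ht))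
  have hderiv := hasDerivAt_integral_of_dominated_loc_of_deriv_le (ball_mem_nhds w₀ hr)
    (F := fun w t => ((t ^ γ : ℝ) : ℂ) / ((t : ℂ) + w))
    (F' := fun w t => -(((t ^ γ : ℝ) : ℂ) / ((t : ℂ) + w) ^ 2))
    (.of_forall fun w => by simpa using hmeas w 1)
    ((integrableOn_rpow_div_add_one hγ).const_mul _ |>.mono' (by simpa using hmeas w₀ 1)
      ((hbound 1 one_ne_zero).mono fun t ht => by simpa using ht w₀ (mem_ball_self hr)))
    (hmeas w₀ 2).neg
    ((hbound 2 two_ne_zero).mono fun t ht w hw => (norm_neg _).trans_le (ht w hw))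
    ((integrableOn_rpow_div_add_one hγ).const_mul _)
    (ae_restrict_of_forall_mem measurableSet_Ioi fun t ht w hw =>
      hasDerivAt_div_const_add _ _ w (hne w hw t ht))
  simpa [Phi] using hderiv.2.differentiableAt

lemma Phi_neg_ofReal (γ : ℝ) {a : ℝ} (ha : 0 < a) :
    Phi γ (-(a : ℂ)) = ((a ^ γ : ℝ) : ℂ) * Phi γ (-1) := by
  have hpt : ∀ x ∈ Ioi (0 : ℝ), (((a * x) ^ γ : ℝ) : ℂ) / ((↑(a * x) : ℂ) - -(a : ℂ)) =
      ((a : ℂ)⁻¹ * ((a ^ γ : ℝ) : ℂ)) * (((x ^ γ : ℝ) : ℂ) / ((x : ℂ) - -1)) := by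
    intro x hx
    have : (x : ℂ) + 1 ≠ 0 := by exact_mod_cast (by linarith [mem_Ioi.1 hx] : x + 1 ≠ 0)
    rw [Real.mul_rpow ha.le (le_of_lt hx)]
    push_cast
    field_simp
  have h := integral_comp_mul_left_Ioi
    (fun t : ℝ => ((t ^ γ : ℝ) : ℂ) / ((t : ℂ) - -(a : ℂ))) 0 ha
  rw [mul_zero, setIntegral_congr_fun measurableSet_Ioi hpt, integral_const_mul,
    Complex.real_smul, Complex.ofReal_inv, mul_assoc] at h
  exact (mul_left_cancel₀ (inv_ne_zero (ofReal_ne_zero.2 ha.ne')) h).symm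

theorem Phi_neg_eq_mul_cpow {γ : ℝ} (hγ : γ ∈ Ioo (-1) 0) {w : ℂ} (hw : w ∈ slitPlane) :
    Phi γ (-w) = Phi γ (-1) * w ^ (γ : ℂ) := by
  have hf : AnalyticOnNhd ℂ (fun w => Phi γ (-w)) slitPlane :=
    DifferentiableOn.analyticOnNhd
      (fun w hw => (differentiableAt_Phi_neg hγ hw).differentiableWithinAt) isOpen_slitPlane
  have hg : AnalyticOnNhd ℂ (fun w => Phi γ (-1) * w ^ (γ : ℂ)) slitPlane :=
    DifferentiableOn.analyticOnNhd (fun w hw =>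
      ((differentiableAt_id.cpow (differentiableAt_const _) hw).const_mul _).differentiableWithinAt)
      isOpen_slitPlane
  have h_real : ∃ᶠ z in 𝓝[≠] (1 : ℂ), Phi γ (-z) = Phi γ (-1) * z ^ (γ : ℂ) := by
    have h_ofReal : Tendsto ofReal (𝓝[≠] (1 : ℝ)) (𝓝[≠] (1 : ℂ)) :=
      continuous_ofReal.continuousWithinAt.tendsto_nhdsWithin fun x hx => by simpa using hx
    refine h_ofReal.frequently (Eventually.frequently ?_)
    filter_upwards [nhdsWithin_le_nhds (lt_mem_nhds one_pos)] with a ha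
    rw [Phi_neg_ofReal γ ha, ← ofReal_cpow ha.le, mul_comm]
  have hU : IsPreconnected slitPlane :=
    (starConvex_one_slitPlane.isPathConnected one_mem_slitPlane).isConnected.isPreconnected
  exact hf.eqOn_of_preconnected_of_frequently_eq hg hU one_mem_slitPlane h_real hw

lemma Phi_neg_one_ne_zero {γ : ℝ} (hγ : γ ∈ Ioo (-1) 0) : Phi γ (-1) ≠ 0 := by
  have h : Phi γ (-1) = ((∫ t in Ioi (0 : ℝ), t ^ γ / (t + 1) : ℝ) : ℂ) := by
    rw [Phi, ← integral_complex_ofReal]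
    push_cast
    simp [sub_neg_eq_add]
  rw [h]
  exact ofReal_ne_zero.2 (integral_rpow_div_add_one_pos hγ).ne'

lemma log_cpow_ofReal {γ : ℝ} (hγ : γ ∈ Ioc (-1) 1) {z : ℂ} (hz : z ≠ 0) :
    log (z ^ (γ : ℂ)) = log z * γ := by
  have := neg_pi_lt_arg z
  have := arg_le_pi z
  have := Real.pi_pos
  obtain ⟨h1, h2⟩ := hγ
  rw [cpow_def_of_ne_zero hz]
  apply log_exp <;> rw [mul_comm, im_ofReal_mul, log_im]
  · rcases le_total 0 γ with h | h <;> nlinarith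
  · rcases le_total 0 γ with h | h <;> nlinarith

lemma cpow_ofReal_injective {γ : ℝ} (hγ₀ : γ ≠ 0) (hγ : γ ∈ Ioc (-1) 1) :
    Function.Injective fun z : ℂ => z ^ (γ : ℂ) := by
  have hγ₀' : (γ : ℂ) ≠ 0 := ofReal_ne_zero.2 hγ₀
  intro z w h
  simp only at h
  by_cases hz : z = 0
  · rw [hz, zero_cpow hγ₀', eq_comm, cpow_eq_zero_iff] at h
    exact hz.trans h.1.symm
  by_cases hw : w = 0
  · rw [hw, zero_cpow hγ₀', cpow_eq_zero_iff] at h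
    exact absurd h.1 hz
  have hlog := congrArg log h
  rw [log_cpow_ofReal hγ hz, log_cpow_ofReal hγ hw] at hlog
  rw [← exp_log hz, ← exp_log hw, mul_right_cancel₀ hγ₀' hlog]

/-- For `γ ∈ (-1,0)`: `Φ(ζ) = Φ(-1)·Δ(ζ)` on `ℂ \ [0,∞)`, where
`Δ(ζ) = (-ζ)^γ` (principal power) is the branch of `z ↦ z^γ` positive on the
negative real axis; consequently `Φ` is injective on `ℂ \ [0,∞)`. -/
theorem stmt_6 (γ : ℝ) (hγ : γ ∈ Set.Ioo (-1 : ℝ) 0) :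
    (∀ ζ : ℂ, (∀ r : ℝ, 0 ≤ r → ζ ≠ (r : ℂ)) →
        Phi γ ζ = Phi γ (-1) * (-ζ) ^ (γ : ℂ)) ∧
      Set.InjOn (Phi γ) {ζ : ℂ | ∀ r : ℝ, 0 ≤ r → ζ ≠ (r : ℂ)} := by
  have hΦ : ∀ ζ : ℂ, (∀ r : ℝ, 0 ≤ r → ζ ≠ (r : ℂ)) →
      Phi γ ζ = Phi γ (-1) * (-ζ) ^ (γ : ℂ) := fun ζ hζ => by
    simpa using Phi_neg_eq_mul_cpow hγ (neg_mem_slitPlane_iff.2 hζ)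
  refine ⟨hΦ, fun ζ₁ h₁ ζ₂ h₂ h => ?_⟩
  rw [hΦ ζ₁ h₁, hΦ ζ₂ h₂] at h
  exact neg_injective <| cpow_ofReal_injective hγ.2.ne ⟨hγ.1, by linarith [hγ.2]⟩
    (mul_left_cancel₀ (Phi_neg_one_ne_zero hγ) h)
end

section
/- Let γ ∈ (−1, 1), γ ≠ 0. For ζ ∈ ℂ with Im ζ ≠ 0, the principal-value integral Φ(ζ) = lim_{R→∞} ∫_{−R}^{R} |s|^γ / (s − ζ) ds exists, and equals ∫₀^∞ 2ζ s^γ / ((s − ζ)(s + ζ)) ds, an absolutely convergent integral; moreover Φ is holomorphic on ℂ \ ℝ and odd: Φ(−ζ) = −Φ(ζ). -/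
open MeasureTheory Complex Filter

/-- The absolutely convergent form
`Φ(ζ) = ∫₀^∞ 2ζ s^γ/((s-ζ)(s+ζ)) ds` of the principal-value integral. -/
noncomputable def Phi2 (γ : ℝ) (ζ : ℂ) : ℂ :=
  ∫ s in Set.Ioi (0:ℝ), 2 * ζ * ((s ^ γ : ℝ) : ℂ) / (((s : ℂ) - ζ) * ((s : ℂ) + ζ))

/-!
Folding `∫_{-R}^{R}` at `0` turns `|s|^γ/(s-ζ)` into `s^γ (1/(s-ζ) - 1/(s+ζ)) = 2ζ s^γ/((s-ζ)(s+ζ))`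
on `(0, R)`. Off the real axis `‖s ± ζ‖ ≥ c (1 + s)` with `c > 0` locally uniform in `ζ`, so this
integrand and its `ζ`-derivative `s^γ ((s-ζ)⁻² + (s+ζ)⁻²)` are both dominated by `C s^γ/(1+s)²`,
which is integrable on `(0, ∞)` exactly because `-1 < γ < 1`. This gives absolute convergence, the
principal-value limit, and holomorphy by differentiation under the integral sign.
-/

open Set Metric

noncomputable def phi2Integrand (γ : ℝ) (ζ : ℂ) (s : ℝ) : ℂ :=
  2 * ζ * ((s ^ γ : ℝ) : ℂ) / (((s : ℂ) - ζ) * ((s : ℂ) + ζ))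

lemma integrableOn_rpow_div_one_add_sq {γ : ℝ} (hγ : -1 < γ) (hγ' : γ < 1) :
    IntegrableOn (fun s : ℝ => s ^ γ / (1 + s) ^ 2) (Ioi 0) := by
  have hmeas : AEStronglyMeasurable (fun s : ℝ => s ^ γ / (1 + s) ^ 2) :=
    (by fun_prop : Measurable fun s : ℝ => s ^ γ / (1 + s) ^ 2).aestronglyMeasurable
  rw [← Ioc_union_Ioi_eq_Ioi zero_le_one]
  refine IntegrableOn.union ?_ ?_
  · have hint : IntegrableOn (fun s : ℝ => s ^ γ) (Ioc 0 1) :=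
      (intervalIntegrable_iff_integrableOn_Ioc_of_le zero_le_one).1
        (intervalIntegral.intervalIntegrable_rpow' hγ)
    refine hint.mono' hmeas.restrict ((ae_restrict_mem measurableSet_Ioc).mono fun s hs => ?_)
    have hsγ : 0 ≤ s ^ γ := Real.rpow_nonneg hs.1.le γ
    rw [Real.norm_of_nonneg (by positivity)]
    exact div_le_self hsγ (one_le_pow₀ (by linarith [hs.1]))
  · refine (integrableOn_Ioi_rpow_of_lt (a := γ - 2) (by linarith) zero_lt_one).mono'
      hmeas.restrict ((ae_restrict_mem measurableSet_Ioi).mono fun s hs => ?_)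
    have hs : (0 : ℝ) < s := zero_lt_one.trans hs
    rw [Real.norm_of_nonneg (by positivity), Real.rpow_sub hs, Real.rpow_two]
    gcongr
    linarith

lemma mul_one_add_le_norm_ofReal_sub {ζ : ℂ} {δ M : ℝ} (hδ : 0 ≤ δ) (hδζ : δ ≤ |ζ.im|)
    (hM : ‖ζ‖ ≤ M) (s : ℝ) : δ / (1 + M + δ) * (1 + s) ≤ ‖(s : ℂ) - ζ‖ := by
  have hM₀ : 0 ≤ M := (norm_nonneg ζ).trans hM
  have him : δ ≤ ‖(s : ℂ) - ζ‖ := by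
    have := abs_im_le_norm ((s : ℂ) - ζ)
    rw [sub_im, ofReal_im, zero_sub, abs_neg] at this
    exact hδζ.trans this
  have hre : s - M ≤ ‖(s : ℂ) - ζ‖ := by
    have := norm_sub_norm_le (s : ℂ) ζ
    rw [norm_real, Real.norm_eq_abs] at this
    linarith [le_abs_self s]
  rw [div_mul_eq_mul_div, div_le_iff₀ (by positivity)]
  rcases le_total s (M + δ) with hs | hs <;> nlinarith

lemma mul_one_add_le_norm_ofReal_add {ζ : ℂ} {δ M : ℝ} (hδ : 0 ≤ δ) (hδζ : δ ≤ |ζ.im|)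
    (hM : ‖ζ‖ ≤ M) (s : ℝ) : δ / (1 + M + δ) * (1 + s) ≤ ‖(s : ℂ) + ζ‖ := by
  simpa using mul_one_add_le_norm_ofReal_sub (ζ := -ζ) hδ (by simpa using hδζ)
    (by simpa using hM) s

lemma norm_phi2Integrand_le {γ c s : ℝ} {ζ : ℂ} (hc : 0 < c) (hs : 0 ≤ s)
    (hsub : c * (1 + s) ≤ ‖(s : ℂ) - ζ‖) (hadd : c * (1 + s) ≤ ‖(s : ℂ) + ζ‖) :
    ‖phi2Integrand γ ζ s‖ ≤ 2 * ‖ζ‖ / c ^ 2 * (s ^ γ / (1 + s) ^ 2) := by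
  have hsγ : 0 ≤ s ^ γ := Real.rpow_nonneg hs γ
  simp only [phi2Integrand, norm_div, norm_mul, norm_real, Real.norm_of_nonneg hsγ, norm_ofNat]
  calc 2 * ‖ζ‖ * s ^ γ / (‖(s : ℂ) - ζ‖ * ‖(s : ℂ) + ζ‖)
      ≤ 2 * ‖ζ‖ * s ^ γ / (c * (1 + s) * (c * (1 + s))) := by
        gcongr
    _ = 2 * ‖ζ‖ / c ^ 2 * (s ^ γ / (1 + s) ^ 2) := by
        field_simp

lemma norm_deriv_phi2Integrand_le {γ c s : ℝ} {ζ : ℂ} (hc : 0 < c) (hs : 0 ≤ s)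
    (hsub : c * (1 + s) ≤ ‖(s : ℂ) - ζ‖) (hadd : c * (1 + s) ≤ ‖(s : ℂ) + ζ‖) :
    ‖((s ^ γ : ℝ) : ℂ) * ((((s : ℂ) - ζ) ^ 2)⁻¹ + (((s : ℂ) + ζ) ^ 2)⁻¹)‖
      ≤ 2 / c ^ 2 * (s ^ γ / (1 + s) ^ 2) := by
  have hsγ : 0 ≤ s ^ γ := Real.rpow_nonneg hs γ
  have hc' : 0 < c * (1 + s) := by positivity
  rw [norm_mul, norm_real, Real.norm_of_nonneg hsγ]
  calc s ^ γ * ‖(((s : ℂ) - ζ) ^ 2)⁻¹ + (((s : ℂ) + ζ) ^ 2)⁻¹‖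
      ≤ s ^ γ * (((c * (1 + s)) ^ 2)⁻¹ + ((c * (1 + s)) ^ 2)⁻¹) := by
        gcongr
        refine (norm_add_le _ _).trans ?_
        rw [norm_inv, norm_inv, norm_pow, norm_pow]
        gcongr
    _ = 2 / c ^ 2 * (s ^ γ / (1 + s) ^ 2) := by
        field_simp
        ring

lemma ofReal_sub_ne_zero {ζ : ℂ} (h : ζ.im ≠ 0) (s : ℝ) : (s : ℂ) - ζ ≠ 0 := by
  intro hs
  exact h (by simpa using (congrArg im hs).symm)

lemma ofReal_add_ne_zero {ζ : ℂ} (h : ζ.im ≠ 0) (s : ℝ) : (s : ℂ) + ζ ≠ 0 := by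
  simpa using ofReal_sub_ne_zero (ζ := -ζ) (by simpa using h) s

lemma phi2Integrand_eq_mul_sub_inv (γ : ℝ) {ζ : ℂ} (h : ζ.im ≠ 0) (s : ℝ) :
    phi2Integrand γ ζ s = ((s ^ γ : ℝ) : ℂ) * (((s : ℂ) - ζ)⁻¹ - ((s : ℂ) + ζ)⁻¹) := by
  have h₁ := ofReal_sub_ne_zero h s
  have h₂ := ofReal_add_ne_zero h s
  rw [phi2Integrand]
  field_simp
  ring

lemma hasDerivAt_phi2Integrand (γ : ℝ) {ζ : ℂ} (h : ζ.im ≠ 0) (s : ℝ) :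
    HasDerivAt (fun z => phi2Integrand γ z s)
      (((s ^ γ : ℝ) : ℂ) * ((((s : ℂ) - ζ) ^ 2)⁻¹ + (((s : ℂ) + ζ) ^ 2)⁻¹)) ζ := by
  have hsub := ((hasDerivAt_id' ζ).const_sub (s : ℂ)).fun_inv (ofReal_sub_ne_zero h s)
  have hadd := ((hasDerivAt_id' ζ).const_add (s : ℂ)).fun_inv (ofReal_add_ne_zero h s)
  have hopen : IsOpen {z : ℂ | z.im ≠ 0} := isOpen_ne_fun continuous_im continuous_const
  refine ((hsub.sub hadd).const_mul ((s ^ γ : ℝ) : ℂ)).congr_deriv (by ring)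
    |>.congr_of_eventuallyEq ?_
  filter_upwards [hopen.mem_nhds h] with z hz
  exact phi2Integrand_eq_mul_sub_inv γ hz s

lemma measurable_phi2Integrand (γ : ℝ) (ζ : ℂ) : Measurable (phi2Integrand γ ζ) := by
  unfold phi2Integrand
  fun_prop

lemma integrableOn_phi2Integrand {γ : ℝ} (hγ : -1 < γ) (hγ' : γ < 1) {ζ : ℂ} (h : ζ.im ≠ 0) :
    IntegrableOn (phi2Integrand γ ζ) (Ioi 0) := by
  have hδ : 0 < |ζ.im| := abs_pos.2 h
  set c := |ζ.im| / (1 + ‖ζ‖ + |ζ.im|)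
  have hc : 0 < c := by positivity
  refine ((integrableOn_rpow_div_one_add_sq hγ hγ').const_mul (2 * ‖ζ‖ / c ^ 2)).mono'
    (measurable_phi2Integrand γ ζ).aestronglyMeasurable ?_
  filter_upwards [ae_restrict_mem measurableSet_Ioi] with s hs
  exact norm_phi2Integrand_le hc (le_of_lt hs)
    (mul_one_add_le_norm_ofReal_sub hδ.le le_rfl le_rfl s)
    (mul_one_add_le_norm_ofReal_add hδ.le le_rfl le_rfl s)

lemma differentiableAt_Phi2 {γ : ℝ} (hγ : -1 < γ) (hγ' : γ < 1) {ζ₀ : ℂ} (h₀ : ζ₀.im ≠ 0) :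
    DifferentiableAt ℂ (Phi2 γ) ζ₀ := by
  set δ := |ζ₀.im| / 2 with hδ_def
  have hδ : 0 < δ := by positivity
  set M := ‖ζ₀‖ + δ
  set c := δ / (1 + M + δ)
  have hc : 0 < c := by positivity
  have hball : ∀ ζ ∈ ball ζ₀ δ, δ ≤ |ζ.im| ∧ ‖ζ‖ ≤ M := by
    intro ζ hζ
    rw [mem_ball, dist_eq_norm] at hζ
    have him := abs_im_le_norm (ζ - ζ₀)
    rw [sub_im] at him
    constructor
    · linarith [abs_sub_abs_le_abs_sub ζ₀.im ζ.im, abs_sub_comm ζ₀.im ζ.im, hδ_def]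
    · linarith [norm_le_norm_add_norm_sub' ζ ζ₀]
  have hderiv := hasDerivAt_integral_of_dominated_loc_of_deriv_le (μ := volume.restrict (Ioi 0))
    (F := phi2Integrand γ) (ball_mem_nhds ζ₀ hδ)
    (F' := fun ζ s => ((s ^ γ : ℝ) : ℂ) * ((((s : ℂ) - ζ) ^ 2)⁻¹ + (((s : ℂ) + ζ) ^ 2)⁻¹))
    (.of_forall fun ζ => (measurable_phi2Integrand γ ζ).aestronglyMeasurable)
    (integrableOn_phi2Integrand hγ hγ' h₀) (Measurable.aestronglyMeasurable (by fun_prop))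
    ?_ ((integrableOn_rpow_div_one_add_sq hγ hγ').const_mul (2 / c ^ 2)) ?_
  · exact hderiv.2.differentiableAt
  · filter_upwards [ae_restrict_mem measurableSet_Ioi] with s hs ζ hζ
    obtain ⟨hδζ, hM⟩ := hball ζ hζ
    exact norm_deriv_phi2Integrand_le hc (le_of_lt hs)
      (mul_one_add_le_norm_ofReal_sub hδ.le hδζ hM s)
      (mul_one_add_le_norm_ofReal_add hδ.le hδζ hM s)
  · refine .of_forall fun s ζ hζ => hasDerivAt_phi2Integrand γ ?_ s
    exact abs_pos.1 (hδ.trans_le (hball ζ hζ).1)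

lemma intervalIntegrable_abs_rpow {r : ℝ} (hr : -1 < r) (a b : ℝ) :
    IntervalIntegrable (fun x : ℝ => |x| ^ r) volume a b := by
  have hpos := intervalIntegral.intervalIntegrable_rpow' hr (a := a) (b := b)
  have hneg := (IntervalIntegrable.iff_comp_neg (a := -a) (b := -b)).1
    (intervalIntegral.intervalIntegrable_rpow' hr)
  simp only [neg_neg] at hneg
  refine (hpos.norm.add hneg.norm).mono_fun'
    (Measurable.aestronglyMeasurable (by fun_prop)) (.of_forall fun x => ?_)
  dsimp only
  rw [Real.norm_of_nonneg (Real.rpow_nonneg (abs_nonneg x) r)]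
  rcases le_total 0 x with hx | hx
  · rw [abs_of_nonneg hx]
    exact le_add_of_nonneg_right (norm_nonneg _) |>.trans' (Real.le_norm_self _)
  · rw [abs_of_nonpos hx]
    exact le_add_of_nonneg_left (norm_nonneg _) |>.trans' (Real.le_norm_self _)

lemma integral_neg_self_eq_integral_add_comp_neg {E : Type*} [NormedAddCommGroup E]
    [NormedSpace ℝ E] {f : ℝ → E} {a : ℝ} (hf : IntervalIntegrable f volume (-a) a) :
    ∫ x in -a..a, f x = ∫ x in 0..a, (f x + f (-x)) := by
  have h0 : (0 : ℝ) ∈ uIcc (-a) a := by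
    rcases le_total 0 a with h | h <;> simp [h]
  have hneg : IntervalIntegrable f volume (-a) 0 := hf.mono_set (uIcc_subset_uIcc_left h0)
  have hpos : IntervalIntegrable f volume 0 a := hf.mono_set (uIcc_subset_uIcc_right h0)
  have hneg' : IntervalIntegrable (fun x => f (-x)) volume 0 a := by
    simpa using (IntervalIntegrable.iff_comp_neg (a := 0) (b := -a)).1 hneg.symm
  rw [← intervalIntegral.integral_add_adjacent_intervals hneg hpos,
    intervalIntegral.integral_add hpos hneg', intervalIntegral.integral_comp_neg, neg_zero,
    add_comm]

-- `0 ≤ R` matters: for negative `s`, `Real.rpow` gives `s ^ γ ≠ |s| ^ γ` in general.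
lemma integral_neg_self_eq_integral_phi2Integrand {γ : ℝ} (hγ : -1 < γ) {ζ : ℂ}
    (h : ζ.im ≠ 0) {R : ℝ} (hR : 0 ≤ R) :
    ∫ s in (-R)..R, ((|s| ^ γ : ℝ) : ℂ) / ((s : ℂ) - ζ) = ∫ s in 0..R, phi2Integrand γ ζ s := by
  have hint : IntervalIntegrable (fun s : ℝ => ((|s| ^ γ : ℝ) : ℂ) / ((s : ℂ) - ζ))
      volume (-R) R := by
    refine ((intervalIntegrable_abs_rpow hγ (-R) R).const_mul |ζ.im|⁻¹).mono_fun'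
      (Measurable.aestronglyMeasurable (by fun_prop)) (.of_forall fun s => ?_)
    have him := abs_im_le_norm ((s : ℂ) - ζ)
    rw [sub_im, ofReal_im, zero_sub, abs_neg] at him
    dsimp only
    rw [norm_div, norm_real, Real.norm_of_nonneg (Real.rpow_nonneg (abs_nonneg s) γ),
      div_eq_inv_mul]
    gcongr
  rw [integral_neg_self_eq_integral_add_comp_neg hint]
  refine intervalIntegral.integral_congr_ae (.of_forall fun s hs => ?_)
  rw [uIoc_of_le hR] at hs
  rw [phi2Integrand_eq_mul_sub_inv γ h, abs_neg, abs_of_pos hs.1, ofReal_neg,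
    show -(s : ℂ) - ζ = -((s : ℂ) + ζ) by ring, div_neg]
  ring

lemma Phi2_neg (γ : ℝ) (ζ : ℂ) : Phi2 γ (-ζ) = -Phi2 γ ζ := by
  rw [Phi2, Phi2, ← integral_neg]
  congr 1 with s
  ring

lemma tendsto_integral_neg_self_Phi2 {γ : ℝ} (hγ : -1 < γ) (hγ' : γ < 1) {ζ : ℂ}
    (h : ζ.im ≠ 0) :
    Tendsto (fun R : ℝ => ∫ s in (-R)..R, ((|s| ^ γ : ℝ) : ℂ) / ((s : ℂ) - ζ))
      atTop (nhds (Phi2 γ ζ)) := by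
  refine (intervalIntegral_tendsto_integral_Ioi 0 (integrableOn_phi2Integrand hγ hγ' h)
    tendsto_id).congr' ?_
  filter_upwards [eventually_ge_atTop 0] with R hR
  exact (integral_neg_self_eq_integral_phi2Integrand hγ h hR).symm

theorem stmt_8_general (γ : ℝ) (hγ : γ ∈ Set.Ioo (-1 : ℝ) 1) :
    (∀ ζ : ℂ, ζ.im ≠ 0 →
      MeasureTheory.IntegrableOn
        (fun s : ℝ => 2 * ζ * ((s ^ γ : ℝ) : ℂ) / (((s : ℂ) - ζ) * ((s : ℂ) + ζ)))
        (Set.Ioi 0) ∧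
      Filter.Tendsto (fun R : ℝ => ∫ s in (-R)..R, ((|s| ^ γ : ℝ) : ℂ) / ((s : ℂ) - ζ))
        Filter.atTop (nhds (Phi2 γ ζ)) ∧
      Phi2 γ (-ζ) = -Phi2 γ ζ) ∧
    DifferentiableOn ℂ (Phi2 γ) {ζ : ℂ | ζ.im ≠ 0} := by
  obtain ⟨hγ₁, hγ₂⟩ := hγ
  refine ⟨fun ζ hζ => ⟨integrableOn_phi2Integrand hγ₁ hγ₂ hζ,
    tendsto_integral_neg_self_Phi2 hγ₁ hγ₂ hζ, Phi2_neg γ ζ⟩, fun ζ hζ => ?_⟩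
  exact (differentiableAt_Phi2 hγ₁ hγ₂ hζ).differentiableWithinAt

/-- For `γ ∈ (-1,1) \ {0}` and `Im ζ ≠ 0`: the integrand of `Phi2` is
integrable on `(0,∞)`, the principal value `lim_{R→∞} ∫_{-R}^R |s|^γ/(s-ζ) ds`
exists and equals `Phi2 γ ζ`, `Phi2 γ` is odd, and it is holomorphic on
`ℂ \ ℝ`. -/
theorem stmt_8 (γ : ℝ) (hγ : γ ∈ Set.Ioo (-1 : ℝ) 1) (hγ0 : γ ≠ 0) :
    (∀ ζ : ℂ, ζ.im ≠ 0 →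
      MeasureTheory.IntegrableOn
        (fun s : ℝ => 2 * ζ * ((s ^ γ : ℝ) : ℂ) / (((s : ℂ) - ζ) * ((s : ℂ) + ζ)))
        (Set.Ioi 0) ∧
      Filter.Tendsto (fun R : ℝ => ∫ s in (-R)..R, ((|s| ^ γ : ℝ) : ℂ) / ((s : ℂ) - ζ))
        Filter.atTop (nhds (Phi2 γ ζ)) ∧
      Phi2 γ (-ζ) = -Phi2 γ ζ) ∧
    DifferentiableOn ℂ (Phi2 γ) {ζ : ℂ | ζ.im ≠ 0} :=
  stmt_8_general γ hγ
end

section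
/- Let u, v be complex numbers with Im u > 0 and Im v > 0, let k, l be positive integers, and let b ∈ ℝ. Then the integrals ∫_ε^R e^{ibη} (e^{iu η^{l/k}} − e^{iv η^{l/k}})/η dη are bounded uniformly over all 0 < ε ≤ R < ∞: there is a constant C depending only on u, v, l/k such that the absolute value of the integral is at most C. -/
open MeasureTheory Complex Set

/-! With `α = l / k`, the integrand is bounded, uniformly in `b`, by a function of `η` that is
integrable on `(0, ∞)`: for `η ≤ 1` by `‖u - v‖ η^(α-1)`, because `exp` is 1-Lipschitz on the
closed left half-plane, and for `η > 1` by `(1 / Im u + 1 / Im v) η^(-α-1)`, because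
`e^(-x) ≤ 1 / x`. The integral of this majorant over `(0, ∞)` is the constant. -/

theorem Complex.norm_exp_sub_exp_le_of_re_nonpos {w₁ w₂ : ℂ} (h₁ : w₁.re ≤ 0) (h₂ : w₂.re ≤ 0) :
    ‖exp w₁ - exp w₂‖ ≤ ‖w₁ - w₂‖ := by
  simpa only [one_mul] using
    (convex_halfSpace_re_le 0).norm_image_sub_le_of_norm_hasDerivWithin_le (C := 1)
    (fun z _ => (hasDerivAt_exp z).hasDerivWithinAt)
    (fun z hz => by rw [norm_exp]; exact Real.exp_le_one_iff.2 hz) h₂ h₁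

theorem Complex.re_I_mul_mul_ofReal (u : ℂ) (t : ℝ) : (I * u * t).re = -(u.im * t) := by
  simp

theorem Complex.norm_exp_I_mul_mul_ofReal_sub_le {u v : ℂ} (hu : 0 ≤ u.im) (hv : 0 ≤ v.im)
    {t : ℝ} (ht : 0 ≤ t) : ‖exp (I * u * t) - exp (I * v * t)‖ ≤ ‖u - v‖ * t := by
  calc ‖exp (I * u * t) - exp (I * v * t)‖ ≤ ‖I * u * t - I * v * t‖ :=
        norm_exp_sub_exp_le_of_re_nonpos (by rw [re_I_mul_mul_ofReal]; nlinarith)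
          (by rw [re_I_mul_mul_ofReal]; nlinarith)
    _ = ‖u - v‖ * t := by
        rw [← sub_mul, ← mul_sub, norm_mul, norm_mul, norm_I, one_mul, norm_real,
          Real.norm_of_nonneg ht]

theorem Complex.norm_exp_I_mul_mul_ofReal_le_inv {u : ℂ} (hu : 0 < u.im) {t : ℝ} (ht : 0 < t) :
    ‖exp (I * u * t)‖ ≤ (u.im * t)⁻¹ := by
  rw [norm_exp, re_I_mul_mul_ofReal, Real.exp_neg]
  exact inv_anti₀ (by positivity) (by linarith [Real.add_one_le_exp (u.im * t)])

theorem integrableOn_Ioi_ite_rpow {s r : ℝ} (hs : -1 < s) (hr : r < -1) (M K : ℝ) :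
    IntegrableOn (fun η : ℝ => if η ≤ 1 then M * η ^ s else K * η ^ r) (Ioi 0) := by
  rw [← Ioc_union_Ioi_eq_Ioi zero_le_one]
  refine IntegrableOn.union ?_ ?_
  · exact IntegrableOn.congr_fun ((intervalIntegral.intervalIntegrable_rpow' hs).1.const_mul M)
      (fun η hη => by simp only [if_pos hη.2]) measurableSet_Ioc
  · exact IntegrableOn.congr_fun ((integrableOn_Ioi_rpow_of_lt hr one_pos).const_mul K)
      (fun η hη => by simp only [if_neg (not_le.2 (mem_Ioi.1 hη))]) measurableSet_Ioi

theorem norm_intervalIntegral_le_integral_Ioi {E : Type*} [NormedAddCommGroup E]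
    [NormedSpace ℝ E] {f : ℝ → E} {g : ℝ → ℝ} {a ε R : ℝ} (hg : IntegrableOn g (Ioi a))
    (hfg : ∀ η ∈ Ioi a, ‖f η‖ ≤ g η) (hε : a ≤ ε) (hεR : ε ≤ R) :
    ‖∫ η in ε..R, f η‖ ≤ ∫ η in Ioi a, g η := by
  have hsub : Ioc ε R ⊆ Ioi a := fun η hη => hε.trans_lt hη.1
  have hg_nonneg : ∀ η ∈ Ioi a, 0 ≤ g η := fun η hη => (norm_nonneg _).trans (hfg η hη)
  calc ‖∫ η in ε..R, f η‖ ≤ ∫ η in ε..R, g η :=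
        intervalIntegral.norm_integral_le_of_norm_le hεR
          (Filter.Eventually.of_forall fun η hη => hfg η (hsub hη))
          ((intervalIntegrable_iff_integrableOn_Ioc_of_le hεR).2 (hg.mono_set hsub))
    _ = ∫ η in Ioc ε R, g η := intervalIntegral.integral_of_le hεR
    _ ≤ ∫ η in Ioi a, g η :=
        setIntegral_mono_set hg ((ae_restrict_iff' measurableSet_Ioi).2
          (Filter.Eventually.of_forall hg_nonneg)) hsub.eventuallyLE

theorem norm_exp_mul_exp_sub_exp_div_le {u v : ℂ} (hu : 0 < u.im) (hv : 0 < v.im) {α : ℝ}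
    (b : ℝ) {η : ℝ} (hη : 0 < η) :
    ‖exp (I * b * η) * (exp (I * u * ((η ^ α : ℝ) : ℂ)) - exp (I * v * ((η ^ α : ℝ) : ℂ)))
        / (η : ℂ)‖ ≤
      if η ≤ 1 then ‖u - v‖ * η ^ (α - 1) else (1 / u.im + 1 / v.im) * η ^ (-α - 1) := by
  have ht : 0 < η ^ α := Real.rpow_pos_of_pos hη α
  have hb : ‖exp (I * b * η)‖ = 1 := by rw [norm_exp, re_I_mul_mul_ofReal]; simp
  rw [norm_div, norm_mul, hb, one_mul, norm_real, Real.norm_of_nonneg hη.le]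
  split_ifs with hη1
  · calc _ ≤ ‖u - v‖ * η ^ α / η := by
          gcongr; exact norm_exp_I_mul_mul_ofReal_sub_le hu.le hv.le ht.le
      _ = ‖u - v‖ * η ^ (α - 1) := by rw [Real.rpow_sub_one hη.ne', mul_div_assoc]
  · calc _ ≤ ((u.im * η ^ α)⁻¹ + (v.im * η ^ α)⁻¹) / η := by
          gcongr
          exact (norm_sub_le _ _).trans (add_le_add (norm_exp_I_mul_mul_ofReal_le_inv hu ht)
            (norm_exp_I_mul_mul_ofReal_le_inv hv ht))
      _ = (1 / u.im + 1 / v.im) * η ^ (-α - 1) := by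
          rw [Real.rpow_sub_one hη.ne', Real.rpow_neg hη.le]
          field_simp

/-- Uniform bound for `∫_ε^R e^{ibη}(e^{iuη^{l/k}} - e^{ivη^{l/k}})/η dη` over
all `0 < ε ≤ R` and `b ∈ ℝ`, with a constant depending only on `u, v, l/k`,
where `Im u > 0` and `Im v > 0`. -/
theorem stmt_13 (u v : ℂ) (hu : 0 < u.im) (hv : 0 < v.im)
    (k l : ℕ) (hk : 0 < k) (hl : 0 < l) :
    ∃ C : ℝ, ∀ b ε R : ℝ, 0 < ε → ε ≤ R →
      ‖∫ η in ε..R, Complex.exp (Complex.I * b * η) *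
          (Complex.exp (Complex.I * u * ((η ^ ((l : ℝ) / k) : ℝ) : ℂ)) -
           Complex.exp (Complex.I * v * ((η ^ ((l : ℝ) / k) : ℝ) : ℂ))) / (η : ℂ)‖ ≤ C := by
  have hα : 0 < (l : ℝ) / k := by positivity
  exact ⟨_, fun b ε R hε hεR => norm_intervalIntegral_le_integral_Ioi
    (integrableOn_Ioi_ite_rpow (by linarith) (by linarith) _ _)
    (fun η hη => norm_exp_mul_exp_sub_exp_div_le hu hv b hη) hε.le hεR⟩
end
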